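/- Let M be a pointed metric space, let {Y_i}_{i ∈ I} be a family of real Banach spaces, and let Y = (⊕_{i∈I} Y_i)_{ℓ∞} be their ℓ∞-sum, i.e., the Banach space of bounded families (y_i)_{i∈I} with y_i ∈ Y_i, equipped with the norm ‖(y_i)‖ = sup_{i∈I} ‖y_i‖. Assume that for each i ∈ I the pair (M, Y_i) has the Lip-BPB property witnessed by a function η_i, and that inf{η_i(ε) : i ∈ I} > 0 for every ε > 0. Then the pair (M, Y) has the Lip-BPB property. -/

import Mathlib

open Set Metric NNReal MeasureTheory

/-- A Lipschitz map vanishing at the base point `z`, i.e. an element of `Lip₀(M,Y)`. -/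
def IsLip0 {M Y : Type*} [MetricSpace M] [NormedAddCommGroup Y]
    (z : M) (F : M → Y) : Prop :=
  (∃ K : ℝ≥0, LipschitzWith K F) ∧ F z = 0

/-- The Lipschitz norm `‖F‖_L = sup {‖F p - F q‖ / d(p,q) : p ≠ q}`. -/
noncomputable def lipNorm {M Y : Type*} [MetricSpace M] [NormedAddCommGroup Y]
    (F : M → Y) : ℝ :=
  sSup {r : ℝ | ∃ p q : M, p ≠ q ∧ r = ‖F p - F q‖ / dist p q}

/-- `F` strongly attains its norm. -/
def StronglyAttains {M Y : Type*} [MetricSpace M] [NormedAddCommGroup Y]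
    (F : M → Y) : Prop :=
  ∃ p q : M, p ≠ q ∧ ‖F p - F q‖ = lipNorm F * dist p q

/-- `F` is Lipschitz compact: its Lipschitz image is relatively compact. -/
def IsLipCompact {M Y : Type*} [MetricSpace M] [NormedAddCommGroup Y] [NormedSpace ℝ Y]
    (F : M → Y) : Prop :=
  IsCompact (closure {y : Y | ∃ p q : M, p ≠ q ∧ y = (dist p q)⁻¹ • (F p - F q)})

/-- The pair `(M,Y)` has the Lip-BPB property witnessed by the function `η`. -/
def LipBPBWith (M : Type*) [MetricSpace M] (z : M)
    (Y : Type*) [NormedAddCommGroup Y] (η : ℝ → ℝ) : Prop :=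
  (∀ ε > 0, η ε > 0) ∧
  ∀ ε > 0, ∀ F : M → Y, IsLip0 z F → lipNorm F = 1 →
    ∀ p q : M, p ≠ q → ‖F p - F q‖ > (1 - η ε) * dist p q →
      ∃ G : M → Y, IsLip0 z G ∧ ∃ r s : M, r ≠ s ∧
        ‖G r - G s‖ = dist r s ∧ lipNorm G = 1 ∧
        lipNorm (fun x => G x - F x) < ε ∧
        (dist p r + dist q s) / dist p q < ε

/-- The pair `(M,Y)` has the Lip-BPB property. -/
def LipBPB (M : Type*) [MetricSpace M] (z : M)
    (Y : Type*) [NormedAddCommGroup Y] : Prop :=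
  ∃ η : ℝ → ℝ, LipBPBWith M z Y η

/-- The pair `(M,Y)` has the Lip-BPB property for Lipschitz compact maps
witnessed by the function `η`. -/
def LipBPBCompactWith (M : Type*) [MetricSpace M] (z : M)
    (Y : Type*) [NormedAddCommGroup Y] [NormedSpace ℝ Y] (η : ℝ → ℝ) : Prop :=
  (∀ ε > 0, η ε > 0) ∧
  ∀ ε > 0, ∀ F : M → Y, IsLip0 z F → IsLipCompact F → lipNorm F = 1 →
    ∀ p q : M, p ≠ q → ‖F p - F q‖ > (1 - η ε) * dist p q →
      ∃ G : M → Y, IsLip0 z G ∧ IsLipCompact G ∧ ∃ r s : M, r ≠ s ∧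
        ‖G r - G s‖ = dist r s ∧ lipNorm G = 1 ∧
        lipNorm (fun x => G x - F x) < ε ∧
        (dist p r + dist q s) / dist p q < ε

/-- The pair `(M,Y)` has the Lip-BPB property for Lipschitz compact maps. -/
def LipBPBCompact (M : Type*) [MetricSpace M] (z : M)
    (Y : Type*) [NormedAddCommGroup Y] [NormedSpace ℝ Y] : Prop :=
  ∃ η : ℝ → ℝ, LipBPBCompactWith M z Y η

/-- `SA(M,Y)` is dense in `Lip₀(M,Y)`. -/
def SADense (M : Type*) [MetricSpace M] (z : M)
    (Y : Type*) [NormedAddCommGroup Y] : Prop :=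
  ∀ F : M → Y, IsLip0 z F → ∀ ε > 0,
    ∃ G : M → Y, IsLip0 z G ∧ StronglyAttains G ∧ lipNorm (fun x => G x - F x) < ε

/-- `SA_K(M,Y)` is dense in `Lipc(M,Y)`. -/
def SAKDense (M : Type*) [MetricSpace M] (z : M)
    (Y : Type*) [NormedAddCommGroup Y] [NormedSpace ℝ Y] : Prop :=
  ∀ F : M → Y, IsLip0 z F → IsLipCompact F → ∀ ε > 0,
    ∃ G : M → Y, IsLip0 z G ∧ IsLipCompact G ∧ StronglyAttains G ∧
      lipNorm (fun x => G x - F x) < ε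

/-!
Given `F : M → ℓ∞(Yᵢ)` of norm one almost attained at `(p, q)`, some coordinate `Fᵢ` almost
attains it at `(p, q)` as well, with `1 - ‖Fᵢ‖_L` small. Normalising `Fᵢ` and applying the
Lip-BPB property of `(M, Yᵢ)` with the uniform modulus yields `G'`; replacing the `i`-th
coordinate of `F` by `G'` gives a map that strongly attains its norm at the pair where `G'` does,
since the other coordinates have Lipschitz norm at most one, and its distance to `F` is that of
`G'` to `Fᵢ`.
-/

section LipNorm

variable {M Y : Type*} [MetricSpace M] [NormedAddCommGroup Y]

lemma lipNorm_nonneg (F : M → Y) : 0 ≤ lipNorm F :=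
  Real.sSup_nonneg fun _ ⟨_, _, _, hr⟩ => hr ▸ by positivity

lemma lipNorm_le {F : M → Y} {C : ℝ} (hC : 0 ≤ C)
    (h : ∀ p q, p ≠ q → ‖F p - F q‖ ≤ C * dist p q) : lipNorm F ≤ C :=
  Real.sSup_le (fun _ ⟨p, q, hpq, hr⟩ => hr ▸ (div_le_iff₀ (dist_pos.2 hpq)).2 (h p q hpq)) hC

lemma LipschitzWith.norm_sub_le_lipNorm_mul {K : ℝ≥0} {F : M → Y} (hF : LipschitzWith K F)
    (p q : M) : ‖F p - F q‖ ≤ lipNorm F * dist p q := by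
  rcases eq_or_ne p q with rfl | hpq
  · simp
  rw [← div_le_iff₀ (dist_pos.2 hpq)]
  refine le_csSup ⟨K, ?_⟩ ⟨p, q, hpq, rfl⟩
  rintro _ ⟨a, b, hab, rfl⟩
  rw [div_le_iff₀ (dist_pos.2 hab), ← dist_eq_norm]
  exact hF.dist_le_mul a b

lemma lipNorm_congr {Z : Type*} [NormedAddCommGroup Z] {F : M → Y} {G : M → Z}
    (h : ∀ p q, ‖F p - F q‖ = ‖G p - G q‖) : lipNorm F = lipNorm G := by
  simp only [lipNorm, h]

lemma lipNorm_eq_one_of_norm_sub_le {G : M → Y} (hG : ∀ x y, ‖G x - G y‖ ≤ dist x y)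
    {r s : M} (hrs : r ≠ s) (hGrs : ‖G r - G s‖ = dist r s) : lipNorm G = 1 := by
  refine le_antisymm (lipNorm_le zero_le_one fun x y _ => (one_mul (dist x y)).symm ▸ hG x y) ?_
  have hlip : LipschitzWith 1 G := .of_dist_le_mul fun x y => by simpa [dist_eq_norm] using hG x y
  have := hlip.norm_sub_le_lipNorm_mul r s
  rw [hGrs] at this
  exact le_of_mul_le_mul_right (by simpa using this) (dist_pos.2 hrs)

lemma lipNorm_add_le {K K' : ℝ≥0} {F G : M → Y} (hF : LipschitzWith K F)
    (hG : LipschitzWith K' G) : lipNorm (F + G) ≤ lipNorm F + lipNorm G :=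
  lipNorm_le (add_nonneg (lipNorm_nonneg F) (lipNorm_nonneg G)) fun p q _ => calc
    ‖(F + G) p - (F + G) q‖ = ‖(F p - F q) + (G p - G q)‖ := by simp only [Pi.add_apply]; abel_nf
    _ ≤ ‖F p - F q‖ + ‖G p - G q‖ := norm_add_le _ _
    _ ≤ lipNorm F * dist p q + lipNorm G * dist p q :=
      add_le_add (hF.norm_sub_le_lipNorm_mul p q) (hG.norm_sub_le_lipNorm_mul p q)
    _ = (lipNorm F + lipNorm G) * dist p q := by ring

lemma lipNorm_smul [NormedSpace ℝ Y] (c : ℝ) (F : M → Y) : lipNorm (c • F) = |c| * lipNorm F := by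
  rw [lipNorm, lipNorm, ← smul_eq_mul, ← Real.sSup_smul_of_nonneg (abs_nonneg c)]
  congr 1
  ext r
  simp only [Set.mem_smul_set, Pi.smul_apply, ← smul_sub, norm_smul,
    Real.norm_eq_abs, smul_eq_mul]
  constructor
  · rintro ⟨p, q, hpq, rfl⟩
    exact ⟨_, ⟨p, q, hpq, rfl⟩, (mul_div_assoc _ _ _).symm⟩
  · rintro ⟨_, ⟨p, q, hpq, rfl⟩, rfl⟩
    exact ⟨p, q, hpq, (mul_div_assoc _ _ _).symm⟩

end LipNorm

section LipBPB

variable {M Y : Type*} [MetricSpace M] [NormedAddCommGroup Y] {z : M} {η : ℝ → ℝ}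

lemma LipBPBWith.mono {η' : ℝ → ℝ} (h : LipBPBWith M z Y η) (hpos : ∀ ε > 0, 0 < η' ε)
    (hle : ∀ ε > 0, η' ε ≤ η ε) : LipBPBWith M z Y η' :=
  ⟨hpos, fun ε hε F hF hF1 p q hpq hFpq => h.2 ε hε F hF hF1 p q hpq <|
    lt_of_le_of_lt (mul_le_mul_of_nonneg_right (by linarith [hle ε hε]) dist_nonneg) hFpq⟩

lemma LipBPBWith.exists_of_lipNorm_le_one [NormedSpace ℝ Y] (h : LipBPBWith M z Y η)
    {ε : ℝ} (hε : 0 < ε) {F : M → Y} (hF : IsLip0 z F) (hF0 : 0 < lipNorm F)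
    (hF1 : lipNorm F ≤ 1) {p q : M} (hpq : p ≠ q)
    (hFpq : (1 - η ε) * dist p q < ‖F p - F q‖) :
    ∃ G : M → Y, IsLip0 z G ∧ ∃ r s : M, r ≠ s ∧ ‖G r - G s‖ = dist r s ∧ lipNorm G = 1 ∧
      lipNorm (fun x => G x - F x) < ε + (1 - lipNorm F) ∧
      (dist p r + dist q s) / dist p q < ε := by
  obtain ⟨⟨K, hK⟩, hFz⟩ := hF
  set a := lipNorm F
  have ha : 1 ≤ a⁻¹ := (one_le_inv₀ hF0).2 hF1
  have hF'1 : lipNorm (a⁻¹ • F) = 1 := by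
    rw [lipNorm_smul, abs_of_pos (inv_pos.2 hF0), inv_mul_cancel₀ hF0.ne']
  have hF'pq : ‖F p - F q‖ ≤ ‖(a⁻¹ • F) p - (a⁻¹ • F) q‖ := by
    rw [Pi.smul_apply, Pi.smul_apply, ← smul_sub, norm_smul,
      Real.norm_of_nonneg (inv_nonneg.2 hF0.le)]
    exact le_mul_of_one_le_left (norm_nonneg _) ha
  obtain ⟨G, hG, r, s, hrs, hGrs, hG1, hGF', hdist⟩ :=
    h.2 ε hε (a⁻¹ • F) ⟨⟨_, (lipschitzWith_smul a⁻¹).comp hK⟩, by simp [hFz]⟩ hF'1 p q hpq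
      (hFpq.trans_le hF'pq)
  refine ⟨G, hG, r, s, hrs, hGrs, hG1, ?_, hdist⟩
  obtain ⟨⟨KG, hKG⟩, -⟩ := hG
  have hsplit : (fun x => G x - F x) = (G - a⁻¹ • F) + (a⁻¹ - 1) • F := by
    ext x
    simp only [Pi.add_apply, Pi.sub_apply, Pi.smul_apply]
    module
  calc lipNorm (fun x => G x - F x)
      ≤ lipNorm (G - a⁻¹ • F) + lipNorm ((a⁻¹ - 1) • F) := hsplit ▸
        lipNorm_add_le (hKG.sub ((lipschitzWith_smul _).comp hK)) ((lipschitzWith_smul _).comp hK)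
    _ < ε + (1 - a) := by
      rw [lipNorm_smul, abs_of_nonneg (sub_nonneg.2 ha), sub_mul, inv_mul_cancel₀ hF0.ne', one_mul]
      exact add_lt_add_of_lt_of_le hGF' le_rfl

end LipBPB

section LpInfty

variable {ι : Type*} {Y : ι → Type*} [∀ i, NormedAddCommGroup (Y i)] {p : ENNReal}

lemma lp.exists_lt_norm_apply {f : lp Y ⊤} {c : ℝ} (hc : 0 ≤ c) (hf : c < ‖f‖) :
    ∃ i, c < ‖f i‖ := by
  by_contra! h
  exact hf.not_ge (lp.norm_le_of_forall_le hc h)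

section Update

variable [DecidableEq ι]

noncomputable def lpUpdate (f : lp Y p) (i : ι) (y : Y i) : lp Y p :=
  f + lp.single p i (y - f i)

@[simp]
lemma lpUpdate_apply_self (f : lp Y p) (i : ι) (y : Y i) : lpUpdate f i y i = y := by
  simp [lpUpdate]

lemma lpUpdate_apply_of_ne (f : lp Y p) {i j : ι} (y : Y i) (h : j ≠ i) :
    lpUpdate f i y j = f j := by
  simp [lpUpdate, h]

lemma lpUpdate_sub_self (f : lp Y p) (i : ι) (y : Y i) :
    lpUpdate f i y - f = lp.single p i (y - f i) :=
  add_sub_cancel_left _ _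

end Update

variable [Fact (1 ≤ p)]

lemma lp.norm_apply_sub_apply_le (f g : lp Y p) (i : ι) : ‖f i - g i‖ ≤ ‖f - g‖ :=
  lp.norm_apply_le_norm (zero_lt_one.trans_le Fact.out).ne' (f - g) i

section Lipschitz

variable {M : Type*} [MetricSpace M] {K : ℝ≥0} {F : M → lp Y p}

lemma LipschitzWith.lp_apply (hF : LipschitzWith K F) (i : ι) :
    LipschitzWith K fun x => F x i :=
  .of_dist_le_mul fun x y => by
    rw [dist_eq_norm]
    exact (lp.norm_apply_sub_apply_le (F x) (F y) i).trans
      (dist_eq_norm (F x) (F y) ▸ hF.dist_le_mul x y)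

lemma lipNorm_lp_apply_le (hF : LipschitzWith K F) (i : ι) :
    lipNorm (fun x => F x i) ≤ lipNorm F :=
  lipNorm_le (lipNorm_nonneg F) fun x y _ =>
    (lp.norm_apply_sub_apply_le (F x) (F y) i).trans (hF.norm_sub_le_lipNorm_mul x y)

end Lipschitz

variable [DecidableEq ι]

lemma norm_sub_le_norm_lpUpdate_sub (f g : lp Y p) (i : ι) (u v : Y i) :
    ‖u - v‖ ≤ ‖lpUpdate f i u - lpUpdate g i v‖ := by
  simpa using lp.norm_apply_sub_apply_le (lpUpdate f i u) (lpUpdate g i v) i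

lemma norm_lpUpdate_sub_sub_lpUpdate_sub (f g : lp Y p) (i : ι) (u v : Y i) :
    ‖(lpUpdate f i u - f) - (lpUpdate g i v - g)‖ = ‖(u - f i) - (v - g i)‖ := by
  rw [lpUpdate_sub_self, lpUpdate_sub_self, ← lp.single_sub,
    lp.norm_single (zero_lt_one.trans_le Fact.out)]

lemma norm_lpUpdate_sub_lpUpdate_le {f g : lp Y ⊤} {i : ι} {u v : Y i} {C : ℝ} (hC : 0 ≤ C)
    (hfg : ‖f - g‖ ≤ C) (huv : ‖u - v‖ ≤ C) : ‖lpUpdate f i u - lpUpdate g i v‖ ≤ C := by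
  refine lp.norm_le_of_forall_le hC fun j => ?_
  rcases eq_or_ne j i with rfl | hj
  · simpa using huv
  · simpa [lpUpdate_apply_of_ne _ _ hj] using (lp.norm_apply_sub_apply_le f g j).trans hfg

end LpInfty

theorem lipBPBWith_lp_top {ι : Type*} {Y : ι → Type*} [∀ i, NormedAddCommGroup (Y i)]
    [∀ i, NormedSpace ℝ (Y i)] {M : Type*} [MetricSpace M] {z : M} {η : ℝ → ℝ}
    (hη : ∀ ε > 0, 0 < η ε) (h : ∀ i, LipBPBWith M z (Y i) η) :
    LipBPBWith M z (lp Y ⊤) fun ε => min (η (ε / 2)) (min (ε / 2) 1) := by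
  classical
  refine ⟨fun ε hε => lt_min (hη _ (half_pos hε)) (lt_min (half_pos hε) one_pos), ?_⟩
  intro ε hε F ⟨⟨K, hK⟩, hFz⟩ hF1 p q hpq hFpq
  -- `t ≤ η (ε / 2)` lets us use the coordinate pair `(M, Y i)` at `ε / 2`, `t ≤ ε / 2`
  -- absorbs the normalisation loss `1 - ‖Fᵢ‖_L < t`, and `t ≤ 1` makes the threshold
  -- `(1 - t) d` nonnegative.
  set t := min (η (ε / 2)) (min (ε / 2) 1)
  have htη : t ≤ η (ε / 2) := min_le_left _ _
  have htε : t ≤ ε / 2 := (min_le_right _ _).trans (min_le_left _ _)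
  have ht1 : t ≤ 1 := (min_le_right _ _).trans (min_le_right _ _)
  obtain ⟨i, hi⟩ := lp.exists_lt_norm_apply (mul_nonneg (sub_nonneg.2 ht1) dist_nonneg) hFpq
  rw [lp.coeFn_sub, Pi.sub_apply] at hi
  set Fi := fun x => F x i
  have hFi1 : lipNorm Fi ≤ 1 := hF1 ▸ lipNorm_lp_apply_le hK i
  have hFit : 1 - t < lipNorm Fi := lt_of_mul_lt_mul_right
    (hi.trans_le ((hK.lp_apply i).norm_sub_le_lipNorm_mul p q)) dist_nonneg
  obtain ⟨G', ⟨⟨KG, hKG⟩, hG'z⟩, r, s, hrs, hG'rs, hG'1, hG'F, hdist⟩ :=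
    (h i).exists_of_lipNorm_le_one (half_pos hε) ⟨⟨K, hK.lp_apply i⟩, by simp [hFz]⟩
      (by linarith) hFi1 hpq (lt_of_le_of_lt (by gcongr) hi)
  set G := fun x => lpUpdate (F x) i (G' x)
  have hG : ∀ x y, ‖G x - G y‖ ≤ dist x y := fun x y =>
    norm_lpUpdate_sub_lpUpdate_le dist_nonneg
      (by simpa [hF1] using hK.norm_sub_le_lipNorm_mul x y)
      (by simpa [hG'1] using hKG.norm_sub_le_lipNorm_mul x y)
  have hGrs : ‖G r - G s‖ = dist r s :=
    le_antisymm (hG r s) (hG'rs ▸ norm_sub_le_norm_lpUpdate_sub _ _ _ _ _)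
  have hGz : G z = 0 := by simp [G, lpUpdate, hFz, hG'z]
  refine ⟨G, ⟨⟨1, .of_dist_le_mul fun x y => by simpa [dist_eq_norm] using hG x y⟩, hGz⟩,
    r, s, hrs, hGrs, lipNorm_eq_one_of_norm_sub_le hG hrs hGrs, ?_, hdist.trans (half_lt_self hε)⟩
  calc lipNorm (fun x => G x - F x) = lipNorm (fun x => G' x - Fi x) :=
        lipNorm_congr fun x y => norm_lpUpdate_sub_sub_lpUpdate_sub _ _ _ _ _
    _ < ε / 2 + (1 - lipNorm Fi) := hG'F
    _ ≤ ε := by linarith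

theorem lipBPB_lpInfty_sum_general {M : Type*} [MetricSpace M] (z : M)
    {ι : Type*} (Y : ι → Type*) [∀ i, NormedAddCommGroup (Y i)]
    [∀ i, NormedSpace ℝ (Y i)]
    (η : ι → ℝ → ℝ) (h : ∀ i, LipBPBWith M z (Y i) (η i))
    (hinf : ∀ ε > (0 : ℝ), ∃ c > (0 : ℝ), ∀ i, c ≤ η i ε) :
    LipBPB M z (lp Y ⊤) := by
  choose! c hc0 hc using hinf
  exact ⟨_, lipBPBWith_lp_top hc0 fun i => (h i).mono hc0 fun ε hε => hc ε hε i⟩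

/-- If each pair `(M, Y i)` has the Lip-BPB property witnessed by `η i` with
`inf_i (η i ε) > 0` for every `ε > 0`, then `(M, (⊕ᵢ Y i)_{ℓ∞})` has the Lip-BPB property. -/
theorem lipBPB_lpInfty_sum {M : Type*} [MetricSpace M] [CompleteSpace M] (z : M)
    {ι : Type*} (Y : ι → Type*) [∀ i, NormedAddCommGroup (Y i)]
    [∀ i, NormedSpace ℝ (Y i)] [∀ i, CompleteSpace (Y i)]
    (η : ι → ℝ → ℝ) (h : ∀ i, LipBPBWith M z (Y i) (η i))
    (hinf : ∀ ε > (0 : ℝ), ∃ c > (0 : ℝ), ∀ i, c ≤ η i ε) :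
    LipBPB M z (lp Y ⊤) :=
  lipBPB_lpInfty_sum_general z Y η h hinf
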